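/- arXiv:2108.01399 — 5 statements merged into one kernel-verified Lean document; each statement's English description precedes it below -/
import Mathlib

section
/- If a Markushevich basis B of a Banach space X has Property (F) with constant 𝓕, then B is quasi-greedy with constant C_q ≤ 𝓕, i.e., ‖f − G_m(f)‖ ≤ 𝓕‖f‖ for all finitely supported f and all m. -/
open Finset

/-- A semi-normalized Markushevich basis of a real Banach space `X`. -/
structure MBasis (X : Type*) [NormedAddCommGroup X] [NormedSpace ℝ X] where
  e : ℕ → X
  coord : ℕ → X →L[ℝ] ℝ
  biorth : ∀ n m, coord n (e m) = if n = m then 1 else 0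
  dense_span : (Submodule.span ℝ (Set.range e)).topologicalClosure = ⊤
  total : ∀ f : X, (∀ n, coord n f = 0) → f = 0
  semiNormalized : ∃ c₁ c₂ : ℝ, 0 < c₁ ∧
    ∀ n, c₁ ≤ ‖e n‖ ∧ c₁ ≤ ‖coord n‖ ∧ ‖e n‖ ≤ c₂ ∧ ‖coord n‖ ≤ c₂

namespace MBasis

variable {X : Type*} [NormedAddCommGroup X] [NormedSpace ℝ X] (B : MBasis X)

/-- The support of a vector. -/
def supp (f : X) : Set ℕ := {n | B.coord n f ≠ 0}

/-- Finitely supported vectors. -/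
def FinSupp (f : X) : Prop := (B.supp f).Finite

/-- Coordinate projection onto a finite set. -/
noncomputable def P (A : Finset ℕ) (f : X) : X := ∑ n ∈ A, B.coord n f • B.e n

/-- Indicator sum `1_A`. -/
noncomputable def ind (A : Finset ℕ) : X := ∑ n ∈ A, B.e n

/-- Partial sum of order `k`. -/
noncomputable def S (k : ℕ) (f : X) : X := B.P (Finset.range k) f

/-- `A` is a greedy set for `f`. -/
def Greedy (f : X) (A : Finset ℕ) : Prop :=
  ∀ n ∈ A, ∀ m ∉ A, |B.coord m f| ≤ |B.coord n f|

/-- Quasi-greedy with constant `C`. -/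
def QuasiGreedy (C : ℝ) : Prop :=
  ∀ f : X, ∀ A : Finset ℕ, B.Greedy f A → ‖f - B.P A f‖ ≤ C * ‖f‖

/-- Democratic with constant `C`. -/
def Democratic (C : ℝ) : Prop :=
  ∀ A B' : Finset ℕ, A.card ≤ B'.card → ‖B.ind A‖ ≤ C * ‖B.ind B'‖

/-- Conservative with constant `C`. -/
def Conservative (C : ℝ) : Prop :=
  ∀ A B' : Finset ℕ, A.card ≤ B'.card → (∀ i ∈ A, ∀ j ∈ B', i < j) →
    ‖B.ind A‖ ≤ C * ‖B.ind B'‖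

/-- Symmetric for largest coefficients with constant `C`. -/
def SLC (C : ℝ) : Prop :=
  ∀ (f : X) (A B' : Finset ℕ) (ε η : ℕ → ℝ),
    A.card ≤ B'.card → Disjoint A B' →
    Disjoint (B.supp f) ((A ∪ B' : Finset ℕ) : Set ℕ) →
    (∀ n, |B.coord n f| ≤ 1) →
    (∀ n ∈ A, |ε n| = 1) → (∀ n ∈ B', |η n| = 1) →
    ‖f + ∑ n ∈ A, ε n • B.e n‖ ≤ C * ‖f + ∑ n ∈ B', η n • B.e n‖

/-- Almost-greedy with constant `C`. -/
def AlmostGreedy (C : ℝ) : Prop :=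
  ∀ f : X, ∀ A : Finset ℕ, B.Greedy f A →
    ∀ B' : Finset ℕ, B'.card ≤ A.card → ‖f - B.P A f‖ ≤ C * ‖f - B.P B' f‖

/-- Partially-greedy with constant `C`. -/
def PartiallyGreedy (C : ℝ) : Prop :=
  ∀ f : X, ∀ A : Finset ℕ, B.Greedy f A →
    ∀ k ≤ A.card, ‖f - B.P A f‖ ≤ C * ‖f - B.S k f‖

/-- Property (F) with constant `C`. -/
def PropF (C : ℝ) : Prop :=
  ∀ (f g : X) (A B' : Finset ℕ),
    B.FinSupp f → B.FinSupp g → Disjoint (B.supp f) (B.supp g) →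
    A.card ≤ B'.card → Disjoint A B' →
    Disjoint (B.supp (f + g)) ((A ∪ B' : Finset ℕ) : Set ℕ) →
    (∀ n, |B.coord n f| ≤ 1) →
    (∀ m n, B.coord n g ≠ 0 → |B.coord m f| ≤ |B.coord n g|) →
    ‖f + B.ind A‖ ≤ C * ‖f + g + B.ind B'‖

/-- Property (F_p) with constant `C` (extra condition `A < supp(g) ∪ B`). -/
def PropFp (C : ℝ) : Prop :=
  ∀ (f g : X) (A B' : Finset ℕ),
    B.FinSupp f → B.FinSupp g → Disjoint (B.supp f) (B.supp g) →
    A.card ≤ B'.card → Disjoint A B' →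
    Disjoint (B.supp (f + g)) ((A ∪ B' : Finset ℕ) : Set ℕ) →
    (∀ n, |B.coord n f| ≤ 1) →
    (∀ m n, B.coord n g ≠ 0 → |B.coord m f| ≤ |B.coord n g|) →
    (∀ i ∈ A, (∀ j ∈ B.supp g, i < j) ∧ (∀ j ∈ B', i < j)) →
    ‖f + B.ind A‖ ≤ C * ‖f + g + B.ind B'‖

/-- The set of coordinates of `y` with coefficient of modulus one. -/
def unitSet (y : X) : Set ℕ := {n | B.coord n y ≠ 0 ∧ |B.coord n y| = 1}

/-- Property (F*) with constant `C`. -/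
def PropFStar (C : ℝ) : Prop :=
  ∀ f z y : X,
    B.FinSupp f → B.FinSupp z → B.FinSupp y →
    Disjoint (B.supp f) (B.supp z) → Disjoint (B.supp f) (B.supp y) →
    Disjoint (B.supp z) (B.supp y) →
    (∀ n, |B.coord n f| ≤ 1) → (∀ n, |B.coord n z| ≤ 1) →
    (B.supp z).ncard ≤ (B.unitSet y).ncard →
    (∀ m n, B.coord n y ≠ 0 → |B.coord m f| ≤ |B.coord n y|) →
    ‖f + z‖ ≤ C * ‖f + y‖

/-- Property (F*_p) with constant `C` (extra condition `supp z < supp (f + y)`). -/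
def PropFStarP (C : ℝ) : Prop :=
  ∀ f z y : X,
    B.FinSupp f → B.FinSupp z → B.FinSupp y →
    Disjoint (B.supp f) (B.supp z) → Disjoint (B.supp f) (B.supp y) →
    Disjoint (B.supp z) (B.supp y) →
    (∀ n, |B.coord n f| ≤ 1) → (∀ n, |B.coord n z| ≤ 1) →
    (B.supp z).ncard ≤ (B.unitSet y).ncard →
    (∀ m n, B.coord n y ≠ 0 → |B.coord m f| ≤ |B.coord n y|) →
    (∀ i ∈ B.supp z, ∀ j ∈ B.supp (f + y), i < j) →
    ‖f + z‖ ≤ C * ‖f + y‖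

end MBasis

/-- If the basis has Property (F) with constant `𝓕`, then it is quasi-greedy with constant
`C_q ≤ 𝓕` on finitely supported vectors. -/
theorem propF_implies_quasiGreedy
    {X : Type*} [NormedAddCommGroup X] [NormedSpace ℝ X] [CompleteSpace X]
    (B : MBasis X) (F : ℝ) (hF : B.PropF F) :
    ∀ f : X, B.FinSupp f → ∀ A : Finset ℕ, B.Greedy f A →
      ‖f - B.P A f‖ ≤ F * ‖f‖ := by
  -- coordinate of a projection
  have hcoordP : ∀ (g : X) (S : Finset ℕ) (n : ℕ),
      B.coord n (B.P S g) = if n ∈ S then B.coord n g else 0 := by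
    intro g S n
    simp only [MBasis.P, map_sum, map_smul, B.biorth, smul_eq_mul, mul_ite, mul_one, mul_zero]
    rw [Finset.sum_ite_eq S n (fun m => B.coord m g)]
  -- F ≥ 1
  obtain ⟨c₁, c₂, hc₁, hc⟩ := B.semiNormalized
  have he0 : (0:ℝ) < ‖B.e 0‖ := lt_of_lt_of_le hc₁ (hc 0).1
  have hsupp0 : B.supp (0 : X) = ∅ := by
    ext n; simp [MBasis.supp]
  have hF1 : (1:ℝ) ≤ F := by
    have h := hF (B.e 0) 0 ∅ ∅ ?_ ?_ ?_ ?_ ?_ ?_ ?_ ?_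
    · simp only [MBasis.ind, Finset.sum_empty, add_zero] at h
      nlinarith [h, he0]
    · exact Set.Finite.subset (Set.finite_singleton 0) (by
        intro n hn
        simp only [MBasis.supp, Set.mem_setOf_eq, B.biorth] at hn
        by_contra hne
        simp only [Set.mem_singleton_iff] at hne
        rw [if_neg hne] at hn
        exact hn rfl)
    · rw [MBasis.FinSupp, hsupp0]; exact Set.finite_empty
    · rw [hsupp0]; exact Set.disjoint_empty _
    · simp
    · simp
    · simp
    · intro n
      rw [B.biorth]
      split <;> simp
    · intro m n hn; simp at hn
  intro f hf A hA
  rcases Finset.eq_empty_or_nonempty A with rfl | hAne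
  · simp only [MBasis.P, Finset.sum_empty, sub_zero]
    nlinarith [norm_nonneg f]
  by_cases hz : ∃ n ∈ A, B.coord n f = 0
  · -- then all coordinates outside A vanish, so f = P A f
    obtain ⟨n₀, hn₀A, hn₀⟩ := hz
    have : f - B.P A f = 0 := by
      apply B.total
      intro n
      rw [map_sub, hcoordP]
      by_cases hn : n ∈ A
      · simp [hn]
      · have := hA n₀ hn₀A n hn
        rw [hn₀] at this
        simp only [if_neg hn, sub_zero]
        have h1 : |B.coord n f| ≤ 0 := by simpa using this
        have h2 : B.coord n f = 0 := abs_eq_zero.mp (le_antisymm h1 (abs_nonneg _))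
        rw [h2]
    rw [this, norm_zero]
    positivity
  · push_neg at hz
    obtain ⟨a, haA, hamin⟩ := Finset.exists_min_image A (fun n => |B.coord n f|) hAne
    set t := |B.coord a f| with ht
    have htpos : 0 < t := abs_pos.mpr (hz a haA)
    set f' := (1/t) • (f - B.P A f) with hf'
    set g' := (1/t) • (B.P A f) with hg'
    have hcf' : ∀ n, B.coord n f' = if n ∈ A then 0 else (1/t) * B.coord n f := by
      intro n
      rw [hf', map_smul, smul_eq_mul, map_sub, hcoordP]
      split <;> ring
    have hcg' : ∀ n, B.coord n g' = if n ∈ A then (1/t) * B.coord n f else 0 := by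
      intro n
      rw [hg', map_smul, smul_eq_mul, hcoordP]
      split <;> ring
    have hbound : ∀ n, |B.coord n f'| ≤ 1 := by
      intro n
      rw [hcf']
      by_cases hn : n ∈ A
      · simp [hn]
      · rw [if_neg hn, abs_mul, abs_of_pos (by positivity : (0:ℝ) < 1/t)]
        have := hA a haA n hn
        rw [div_mul_eq_mul_div, one_mul, div_le_one htpos]
        exact this
    have h := hF f' g' ∅ ∅ ?_ ?_ ?_ ?_ ?_ ?_ ?_ ?_
    · simp only [MBasis.ind, Finset.sum_empty, add_zero] at h
      have hfg : f' + g' = (1/t) • f := by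
        rw [hf', hg', ← smul_add]; congr 1; abel
      rw [hfg, hf', norm_smul, norm_smul, Real.norm_eq_abs, abs_div, abs_one,
        abs_of_pos htpos] at h
      have h2 := mul_le_mul_of_nonneg_left h htpos.le
      calc ‖f - B.P A f‖ = t * (1/t * ‖f - B.P A f‖) := by field_simp
        _ ≤ t * (F * (1/t * ‖f‖)) := h2
        _ = F * ‖f‖ := by field_simp
    · apply Set.Finite.subset hf
      intro n hn
      simp only [MBasis.supp, Set.mem_setOf_eq, hcf'] at hn ⊢
      intro h0
      apply hn
      split
      · rfl
      · rw [h0, mul_zero]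
    · apply Set.Finite.subset (A.finite_toSet)
      intro n hn
      simp only [MBasis.supp, Set.mem_setOf_eq, hcg'] at hn
      refine Finset.mem_coe.mpr ?_
      by_contra hnA
      rw [if_neg hnA] at hn
      exact hn rfl
    · rw [Set.disjoint_left]
      intro n hn hn2
      simp only [MBasis.supp, Set.mem_setOf_eq] at hn hn2
      by_cases hnA : n ∈ A
      · exact hn (by rw [hcf', if_pos hnA])
      · exact hn2 (by rw [hcg', if_neg hnA])
    · simp
    · simp
    · simp
    · exact hbound
    · intro m n hn
      rw [hcg'] at hn ⊢
      by_cases hnA : n ∈ A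
      · rw [if_pos hnA] at hn ⊢
        calc |B.coord m f'| ≤ 1 := hbound m
          _ ≤ |1/t * B.coord n f| := by
              rw [abs_mul, abs_of_pos (by positivity : (0:ℝ) < 1/t),
                div_mul_eq_mul_div, one_mul, le_div_iff₀ htpos, one_mul]
              exact hamin n hnA
      · rw [if_neg hnA] at hn; exact absurd rfl hn
end

section
/- If a Markushevich basis B of a Banach space X has Property (F) with constant 𝓕, then B is democratic with constant Δ_d ≤ 𝓕: for all finite sets C, D with |C| ≤ |D|, ‖∑_{n∈C} e_n‖ ≤ 𝓕‖∑_{n∈D} e_n‖. -/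
open Finset

lemma MBasis.coord_ind {X : Type*} [NormedAddCommGroup X] [NormedSpace ℝ X]
    (B : MBasis X) (A : Finset ℕ) (n : ℕ) :
    B.coord n (B.ind A) = if n ∈ A then 1 else 0 := by
  simp [MBasis.ind, map_sum, B.biorth]

lemma MBasis.supp_ind {X : Type*} [NormedAddCommGroup X] [NormedSpace ℝ X]
    (B : MBasis X) (A : Finset ℕ) : B.supp (B.ind A) = ↑A := by
  ext n
  simp [MBasis.supp, B.coord_ind]

/-- If the basis has Property (F) with constant `𝓕`, then it is democratic with
constant `Δ_d ≤ 𝓕`. -/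
theorem propF_implies_democratic
    {X : Type*} [NormedAddCommGroup X] [NormedSpace ℝ X] [CompleteSpace X]
    (B : MBasis X) (F : ℝ) (hF : B.PropF F) :
    B.Democratic F := by
  intro A B' hcard
  set E := A ∩ B' with hE
  set A₁ := A \ B' with hA₁
  set B₁ := B' \ A with hB₁
  have hcard' : A₁.card ≤ B₁.card := by
    have h1 : A₁.card + E.card = A.card := Finset.card_sdiff_add_card_inter A B'
    have h2 : B₁.card + (B' ∩ A).card = B'.card := Finset.card_sdiff_add_card_inter B' A
    have : (B' ∩ A).card = E.card := by rw [hE, Finset.inter_comm]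
    omega
  have hdisj : Disjoint A₁ B₁ := disjoint_sdiff_sdiff
  have key := hF (B.ind E) 0 A₁ B₁
    (by rw [MBasis.FinSupp, B.supp_ind]; exact E.finite_toSet)
    (by rw [MBasis.FinSupp]; convert Set.finite_empty; ext n; simp [MBasis.supp])
    (by rw [Set.disjoint_right]; intro n hn; simp [MBasis.supp] at hn)
    hcard' hdisj
    (by
      rw [add_zero, B.supp_ind, Set.disjoint_left]
      intro n hn hn'
      simp only [Finset.coe_union, Set.mem_union, Finset.mem_coe] at hn'
      simp only [hE, Finset.coe_inter, Set.mem_inter_iff, Finset.mem_coe] at hn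
      rcases hn' with h | h
      · exact (Finset.mem_sdiff.mp h).2 hn.2
      · exact (Finset.mem_sdiff.mp h).2 hn.1)
    (by intro n; rw [B.coord_ind]; split <;> simp)
    (by intro m n hn; simp at hn)
  rw [add_zero] at key
  have e1 : B.ind E + B.ind A₁ = B.ind A := by
    rw [MBasis.ind, MBasis.ind, MBasis.ind, hE, hA₁, Finset.sum_inter_add_sum_sdiff]
  have e2 : B.ind E + B.ind B₁ = B.ind B' := by
    rw [MBasis.ind, MBasis.ind, MBasis.ind, hE, hB₁, Finset.inter_comm,
      Finset.sum_inter_add_sum_sdiff]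
  rwa [e1, e2] at key
end

section
/- If a Markushevich basis B is Δ_d-democratic and C_q-quasi-greedy, then B has Property (F) with constant 𝓕 ≤ C_q(1 + (1 + C_q)Δ_d). -/
open Finset

namespace MBasis

variable {X : Type*} [NormedAddCommGroup X] [NormedSpace ℝ X] (B : MBasis X)

lemma coord_ind' (A : Finset ℕ) (n : ℕ) :
    B.coord n (B.ind A) = if n ∈ A then 1 else 0 := by
  simp only [MBasis.ind, map_sum, B.biorth]
  simp [Finset.sum_ite_eq]

lemma coord_P' (A : Finset ℕ) (f : X) (m : ℕ) :
    B.coord m (B.P A f) = if m ∈ A then B.coord m f else 0 := by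
  simp only [MBasis.P, map_sum, map_smul, B.biorth, smul_eq_mul, mul_ite, mul_one, mul_zero]
  simp [Finset.sum_ite_eq]

lemma ext_coord {x y : X} (h : ∀ n, B.coord n x = B.coord n y) : x = y := by
  have h0 : x - y = 0 := B.total _ (fun n => by simp [map_sub, h n])
  exact sub_eq_zero.mp h0

lemma e_ne_zero (n : ℕ) : B.e n ≠ 0 := by
  intro h0
  have h1 : B.coord n (B.e n) = 1 := by simp [B.biorth]
  rw [h0, map_zero] at h1
  exact one_ne_zero h1.symm

lemma one_le_of_quasiGreedy {C : ℝ} (hq : B.QuasiGreedy C) : 1 ≤ C := by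
  have h := hq (B.e 0) ∅ (by intro n hn; simp at hn)
  have hP : B.P ∅ (B.e 0) = 0 := by simp [MBasis.P]
  rw [hP, sub_zero] at h
  have hpos : 0 < ‖B.e 0‖ := norm_pos_iff.mpr (B.e_ne_zero 0)
  nlinarith

lemma one_le_of_democratic {C : ℝ} (hd : B.Democratic C) : 1 ≤ C := by
  have h := hd {0} {0} le_rfl
  have hI : B.ind {0} = B.e 0 := by simp [MBasis.ind]
  rw [hI] at h
  have hpos : 0 < ‖B.e 0‖ := norm_pos_iff.mpr (B.e_ne_zero 0)
  nlinarith

end MBasis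

/-- If the basis is `Δ_d`-democratic and `C_q`-quasi-greedy, then it has Property (F)
with constant `𝓕 ≤ C_q(1 + (1 + C_q)Δ_d)`. -/
theorem democratic_quasiGreedy_implies_propF
    {X : Type*} [NormedAddCommGroup X] [NormedSpace ℝ X] [CompleteSpace X]
    (B : MBasis X) (Δd Cq : ℝ) (hd : B.Democratic Δd) (hq : B.QuasiGreedy Cq) :
    B.PropF (Cq * (1 + (1 + Cq) * Δd)) := by
  intro f g A B' hf hg hdisj hcard hAB hsuppAB hf1 hfg
  classical
  have hCq : 1 ≤ Cq := B.one_le_of_quasiGreedy hq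
  have hDd : 1 ≤ Δd := B.one_le_of_democratic hd
  set h : X := f + g + B.ind B' with hh
  -- pointwise facts
  have hdisj' : ∀ n, B.coord n f ≠ 0 → B.coord n g = 0 := by
    intro n hn
    by_contra hgn
    exact Set.disjoint_left.mp hdisj hn hgn
  have hAB'0 : ∀ n, n ∈ A ∪ B' → B.coord n f = 0 ∧ B.coord n g = 0 := by
    intro n hn
    have hsum : B.coord n f + B.coord n g = 0 := by
      by_contra hc
      have hmem : n ∈ B.supp (f + g) := by
        simpa [MBasis.supp, map_add] using hc
      exact Set.disjoint_left.mp hsuppAB hmem (by exact_mod_cast hn)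
    by_cases hfn : B.coord n f = 0
    · constructor
      · exact hfn
      · linarith [hsum, hfn]
    · have := hdisj' n hfn
      constructor
      · linarith [hsum, this]
      · exact this
  set G : Finset ℕ := hg.toFinset with hG
  have hGmem : ∀ n, n ∈ G ↔ B.coord n g ≠ 0 := by
    intro n; simp [hG, Set.Finite.mem_toFinset, MBasis.supp]
  have hGf : ∀ n ∈ G, B.coord n f = 0 := by
    intro n hn
    by_contra hfn
    exact (hGmem n).mp hn (hdisj' n hfn)
  have hGB' : ∀ n ∈ G, n ∉ B' := by
    intro n hn hnB
    exact (hGmem n).mp hn (hAB'0 n (Finset.mem_union_right _ hnB)).2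
  have hcoordh : ∀ n, B.coord n h =
      B.coord n f + B.coord n g + (if n ∈ B' then 1 else 0) := by
    intro n
    simp [hh, map_add, B.coord_ind']
  -- coord on h, simplified cases
  have hcoordh_G : ∀ n ∈ G, B.coord n h = B.coord n g := by
    intro n hn
    rw [hcoordh n, hGf n hn, if_neg (hGB' n hn)]
    ring
  have hcoordh_B' : ∀ n ∈ B', B.coord n h = 1 := by
    intro n hn
    obtain ⟨h1, h2⟩ := hAB'0 n (Finset.mem_union_right _ hn)
    rw [hcoordh n, h1, h2, if_pos hn]
    ring
  have hcoordh_out : ∀ n, n ∉ G → n ∉ B' → B.coord n h = B.coord n f := by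
    intro n hnG hnB
    have hg0 : B.coord n g = 0 := by
      by_contra hc
      exact hnG ((hGmem n).mpr hc)
    rw [hcoordh n, hg0, if_neg hnB]
    ring
  -- Step 1 : ‖f‖ ≤ Cq ‖h‖  via greedy set G ∪ B'
  have hstep1 : ‖f‖ ≤ Cq * ‖h‖ := by
    have hgreedy : B.Greedy h (G ∪ B') := by
      intro n hn m hm
      have hmG : m ∉ G := fun hc => hm (Finset.mem_union_left _ hc)
      have hmB : m ∉ B' := fun hc => hm (Finset.mem_union_right _ hc)
      rw [hcoordh_out m hmG hmB]
      rcases Finset.mem_union.mp hn with hnG | hnB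
      · rw [hcoordh_G n hnG]
        exact hfg m n ((hGmem n).mp hnG)
      · rw [hcoordh_B' n hnB]
        simpa using hf1 m
    have hquasi := hq h (G ∪ B') hgreedy
    have heq : h - B.P (G ∪ B') h = f := by
      apply B.ext_coord
      intro n
      rw [map_sub, B.coord_P']
      by_cases hn : n ∈ G ∪ B'
      · rw [if_pos hn, sub_self]
        rcases Finset.mem_union.mp hn with hnG | hnB
        · exact (hGf n hnG).symm
        · exact (hAB'0 n (Finset.mem_union_right _ hnB)).1.symm
      · rw [if_neg hn, sub_zero]
        have hnG : n ∉ G := fun hc => hn (Finset.mem_union_left _ hc)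
        have hnB : n ∉ B' := fun hc => hn (Finset.mem_union_right _ hc)
        exact hcoordh_out n hnG hnB
    rwa [heq] at hquasi
  -- Step 2 : ‖1_{B'}‖ ≤ Cq (1+Cq) ‖h‖
  set G₁ : Finset ℕ := G.filter (fun n => 1 < |B.coord n g|) with hG₁
  have hG₁sub : G₁ ⊆ G := Finset.filter_subset _ _
  have hstep2 : ‖B.ind B'‖ ≤ Cq * ((1 + Cq) * ‖h‖) := by
    -- greedy set G₁ ∪ B' for h
    have hgreedy : B.Greedy h (G₁ ∪ B') := by
      intro n hn m hm
      have hmG₁ : m ∉ G₁ := fun hc => hm (Finset.mem_union_left _ hc)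
      have hmB : m ∉ B' := fun hc => hm (Finset.mem_union_right _ hc)
      have hmout : |B.coord m h| ≤ 1 := by
        by_cases hmG : m ∈ G
        · rw [hcoordh_G m hmG]
          have : ¬ (1 < |B.coord m g|) := fun hc =>
            hmG₁ (Finset.mem_filter.mpr ⟨hmG, hc⟩)
          linarith [not_lt.mp this]
        · rw [hcoordh_out m hmG hmB]
          exact hf1 m
      rcases Finset.mem_union.mp hn with hnG₁ | hnB
      · rw [hcoordh_G n (hG₁sub hnG₁)]
        have := (Finset.mem_filter.mp hnG₁).2
        linarith
      · rw [hcoordh_B' n hnB]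
        simpa using hmout
    have hquasi := hq h (G₁ ∪ B') hgreedy
    set w : X := B.P (G₁ ∪ B') h with hw
    have hwh : h - w = h - B.P (G₁ ∪ B') h := rfl
    have hwbound : ‖w‖ ≤ (1 + Cq) * ‖h‖ := by
      have : ‖w‖ ≤ ‖h‖ + ‖h - w‖ := by
        have h2 := norm_sub_le h (h - w)
        rwa [sub_sub_cancel] at h2
      calc ‖w‖ ≤ ‖h‖ + ‖h - w‖ := this
        _ ≤ ‖h‖ + Cq * ‖h‖ := by linarith [hquasi]
        _ = (1 + Cq) * ‖h‖ := by ring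
    -- coordinates of w
    have hcoordw : ∀ n, B.coord n w = if n ∈ G₁ ∪ B' then B.coord n h else 0 := by
      intro n; rw [hw, B.coord_P']
    -- greedy set G₁ for w
    have hgreedy2 : B.Greedy w G₁ := by
      intro n hn m hm
      have hnw : B.coord n w = B.coord n g := by
        rw [hcoordw n, if_pos (Finset.mem_union_left _ hn), hcoordh_G n (hG₁sub hn)]
      have hng : 1 < |B.coord n g| := (Finset.mem_filter.mp hn).2
      have hmw : |B.coord m w| ≤ 1 := by
        rw [hcoordw m]
        by_cases hmm : m ∈ G₁ ∪ B'
        · rw [if_pos hmm]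
          rcases Finset.mem_union.mp hmm with h1 | h2
          · exact absurd h1 hm
          · rw [hcoordh_B' m h2]; norm_num
        · rw [if_neg hmm]; norm_num
      rw [hnw]
      linarith
    have hquasi2 := hq w G₁ hgreedy2
    have heq2 : w - B.P G₁ w = B.ind B' := by
      apply B.ext_coord
      intro n
      rw [map_sub]
      rw [show (B.coord n) (B.P G₁ w) = if n ∈ G₁ then B.coord n w else 0 from
        B.coord_P' G₁ w n]
      rw [hcoordw n, B.coord_ind']
      by_cases hnG₁ : n ∈ G₁
      · have hnB : n ∉ B' := hGB' n (hG₁sub hnG₁)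
        simp [hnG₁, hnB]
      · by_cases hnB : n ∈ B'
        · simp [hnG₁, hnB, hcoordh_B' n hnB]
        · simp [hnG₁, hnB]
    rw [heq2] at hquasi2
    calc ‖B.ind B'‖ ≤ Cq * ‖w‖ := hquasi2
      _ ≤ Cq * ((1 + Cq) * ‖h‖) := by
          apply mul_le_mul_of_nonneg_left hwbound (by linarith)
  -- Step 3 : democracy
  have hstep3 : ‖B.ind A‖ ≤ Δd * ‖B.ind B'‖ := hd A B' hcard
  -- combine
  have htri : ‖f + B.ind A‖ ≤ ‖f‖ + ‖B.ind A‖ := norm_add_le _ _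
  have hhnn : 0 ≤ ‖h‖ := norm_nonneg _
  have hBnn : 0 ≤ ‖B.ind B'‖ := norm_nonneg _
  have : ‖f + B.ind A‖ ≤ Cq * ‖h‖ + Δd * (Cq * ((1 + Cq) * ‖h‖)) := by
    have h3 : ‖B.ind A‖ ≤ Δd * (Cq * ((1 + Cq) * ‖h‖)) := by
      calc ‖B.ind A‖ ≤ Δd * ‖B.ind B'‖ := hstep3
        _ ≤ Δd * (Cq * ((1 + Cq) * ‖h‖)) :=
            mul_le_mul_of_nonneg_left hstep2 (by linarith)
    linarith
  calc ‖f + B.ind A‖ ≤ Cq * ‖h‖ + Δd * (Cq * ((1 + Cq) * ‖h‖)) := this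
    _ = Cq * (1 + (1 + Cq) * Δd) * ‖h‖ := by ring
    _ = Cq * (1 + (1 + Cq) * Δd) * ‖f + g + B.ind B'‖ := by rw [hh]
end

section
/- If a Markushevich basis B is almost-greedy with constant C_al, then B has Property (F*) with constant 𝓕* ≤ C_al(1 + 2C_al). -/
open Finset

section Aux

variable {X : Type*} [NormedAddCommGroup X] [NormedSpace ℝ X] (B : MBasis X)

lemma MBasis.coord_P (A : Finset ℕ) (f : X) (k : ℕ) :
    B.coord k (B.P A f) = if k ∈ A then B.coord k f else 0 := by
  classical
  simp only [MBasis.P, map_sum, map_smul, B.biorth, smul_eq_mul, mul_ite, mul_one, mul_zero]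
  simp [eq_comm]

lemma MBasis.P_eq_self {f : X} {A : Finset ℕ} (hA : B.supp f ⊆ ↑A) :
    B.P A f = f := by
  have hz : ∀ k, B.coord k (B.P A f - f) = 0 := by
    intro k
    rw [map_sub, B.coord_P]
    by_cases hk : k ∈ A
    · simp [hk]
    · have hk0 : B.coord k f = 0 := by
        by_contra hne
        exact hk (hA hne)
      simp [hk, hk0]
  have := B.total _ hz
  exact sub_eq_zero.mp this

end Aux

/-- If the basis is almost-greedy with constant `C_al`, then it has Property (F*)
with constant `𝓕* ≤ C_al(1 + 2C_al)`. -/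
theorem almostGreedy_implies_propFStar
    {X : Type*} [NormedAddCommGroup X] [NormedSpace ℝ X] [CompleteSpace X]
    (B : MBasis X) (Cal : ℝ) (h : B.AlmostGreedy Cal) :
    B.PropFStar (Cal * (1 + 2 * Cal)) := by
  classical
  intro f z y hFf hFz hFy hdfz hdfy hdzy hf1 hz1 hcard hfy
  -- coordinate vanishing from disjoint supports
  have hfz0 : ∀ n, B.coord n z ≠ 0 → B.coord n f = 0 := by
    intro n hn
    by_contra hne
    exact (Set.disjoint_left.mp hdfz hne) hn
  have hfy0 : ∀ n, B.coord n y ≠ 0 → B.coord n f = 0 := by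
    intro n hn
    by_contra hne
    exact (Set.disjoint_left.mp hdfy hne) hn
  have hzy0 : ∀ n, B.coord n y ≠ 0 → B.coord n z = 0 := by
    intro n hn
    by_contra hne
    exact (Set.disjoint_left.mp hdzy hne) hn
  have hyz0 : ∀ n, B.coord n z ≠ 0 → B.coord n y = 0 := by
    intro n hn
    by_contra hne
    exact (Set.disjoint_left.mp hdzy.symm hne) hn
  -- Cal ≥ 1
  obtain ⟨c₁, c₂, hc₁, hsn⟩ := B.semiNormalized
  have hCal1 : 1 ≤ Cal := by
    have hg : B.Greedy (B.e 0) ∅ := fun n hn => absurd hn (Finset.notMem_empty n)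
    have hle := h (B.e 0) ∅ hg ∅ le_rfl
    have hP : B.P (∅ : Finset ℕ) (B.e 0) = 0 := by simp [MBasis.P]
    rw [hP, sub_zero] at hle
    have hpos : 0 < ‖B.e 0‖ := lt_of_lt_of_le hc₁ (hsn 0).1
    nlinarith
  have hCal0 : (0:ℝ) ≤ Cal := le_trans zero_le_one hCal1
  -- set up the finite sets
  set Sy : Finset ℕ := hFy.toFinset with hSydef
  have hUfin : (B.unitSet y).Finite := hFy.subset (fun n hn => hn.1)
  set Z : Finset ℕ := hFz.toFinset with hZdef
  have hmle : Z.card ≤ hUfin.toFinset.card := by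
    have h1 := Set.ncard_eq_toFinset_card _ hFz
    have h2 := Set.ncard_eq_toFinset_card _ hUfin
    rw [h1, h2] at hcard
    exact hcard
  obtain ⟨D, hDsub, hDcard⟩ := Finset.exists_subset_card_eq hmle
  set V : Finset ℕ := Sy.filter (fun n => 1 < |B.coord n y|) with hVdef
  set E : Finset ℕ := D ∪ V with hEdef
  have hDunit : ∀ n ∈ D, B.coord n y ≠ 0 ∧ |B.coord n y| = 1 := fun n hn =>
    hUfin.mem_toFinset.mp (hDsub hn)
  have hVmem : ∀ n ∈ V, 1 < |B.coord n y| := fun n hn => (Finset.mem_filter.mp hn).2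
  have hEy : ∀ n ∈ E, B.coord n y ≠ 0 ∧ 1 ≤ |B.coord n y| := by
    intro n hn
    rcases Finset.mem_union.mp hn with h' | h'
    · exact ⟨(hDunit n h').1, le_of_eq (hDunit n h').2.symm⟩
    · have h2 := hVmem n h'
      refine ⟨?_, le_of_lt h2⟩
      intro h0
      rw [h0] at h2
      simp only [abs_zero] at h2
      linarith
  have hDV : Disjoint D V := by
    rw [Finset.disjoint_left]
    intro n hnD hnV
    have h1 := (hDunit n hnD).2
    have h2 := hVmem n hnV
    linarith
  have hEcard : E.card = Z.card + V.card := by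
    rw [hEdef, Finset.card_union_of_disjoint hDV, hDcard]
  -- the vector v = f + z + P_E y
  set v : X := f + z + B.P E y with hvdef
  have hcoordv : ∀ k, B.coord k v
      = B.coord k f + B.coord k z + (if k ∈ E then B.coord k y else 0) := by
    intro k
    rw [hvdef, map_add, map_add, B.coord_P]
  have hcvE : ∀ n ∈ E, B.coord n v = B.coord n y := by
    intro n hn
    rw [hcoordv n, if_pos hn, hfy0 n (hEy n hn).1, hzy0 n (hEy n hn).1]
    ring
  have hGEv : B.Greedy v E := by
    intro n hn m hm
    rw [hcvE n hn, hcoordv m, if_neg hm, add_zero]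
    rcases hEy n hn with ⟨hny, hny1⟩
    by_cases hmz : B.coord m z = 0
    · rw [hmz, add_zero]
      exact hfy m n hny
    · rw [hfz0 m hmz, zero_add]
      exact le_trans (hz1 m) hny1
  have hZE : Z.card ≤ E.card := by
    rw [hEcard]
    exact Nat.le_add_right _ _
  have hAG1 := h v E hGEv Z hZE
  have hPEv : B.P E v = B.P E y := by
    simp only [MBasis.P]
    exact Finset.sum_congr rfl (fun n hn => by rw [hcvE n hn])
  have hPZv : B.P Z v = z := by
    have hPZ : B.P Z v = B.P Z z := by
      simp only [MBasis.P]
      refine Finset.sum_congr rfl (fun n hn => ?_)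
      have hnz : B.coord n z ≠ 0 := hFz.mem_toFinset.mp hn
      have hnE : n ∉ E := fun hnE => (hEy n hnE).1 (hyz0 n hnz)
      have hcv : B.coord n v = B.coord n z := by
        rw [hcoordv n, if_neg hnE, add_zero, hfz0 n hnz, zero_add]
      rw [hcv]
    rw [hPZ]
    exact B.P_eq_self (fun n hn => hFz.mem_toFinset.mpr hn)
  have hsub1 : v - B.P E v = f + z := by
    rw [hPEv, hvdef]; abel
  have hsub2 : v - B.P Z v = f + B.P E y := by
    rw [hPZv, hvdef]; abel
  rw [hsub1, hsub2] at hAG1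
  -- the vector w = f + y
  set w : X := f + y with hwdef
  have hcoordw : ∀ k, B.coord k w = B.coord k f + B.coord k y := by
    intro k
    rw [hwdef, map_add]
  have hcwS : ∀ n ∈ Sy, B.coord n w = B.coord n y := by
    intro n hn
    have hny : B.coord n y ≠ 0 := hFy.mem_toFinset.mp hn
    rw [hcoordw n, hfy0 n hny, zero_add]
  have hcwout : ∀ m, m ∉ Sy → B.coord m w = B.coord m f := by
    intro m hm
    have hmy : B.coord m y = 0 := by
      by_contra hne
      exact hm (hFy.mem_toFinset.mpr hne)
    rw [hcoordw m, hmy, add_zero]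
  have hGSw : B.Greedy w Sy := by
    intro n hn m hm
    rw [hcwS n hn, hcwout m hm]
    exact hfy m n (hFy.mem_toFinset.mp hn)
  have hESy : ∀ n ∈ E, n ∈ Sy := by
    intro n hn
    exact hFy.mem_toFinset.mpr (hEy n hn).1
  have hGEw : B.Greedy w E := by
    intro n hn m hm
    rw [hcwS n (hESy n hn)]
    by_cases hmS : m ∈ Sy
    · rw [hcwS m hmS]
      have hm1 : |B.coord m y| ≤ 1 := by
        by_contra hgt
        push_neg at hgt
        exact hm (Finset.mem_union.mpr (Or.inr (Finset.mem_filter.mpr ⟨hmS, hgt⟩)))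
      exact le_trans hm1 (hEy n hn).2
    · rw [hcwout m hmS]
      exact hfy m n (hEy n hn).1
  have hAG2 := h w Sy hGSw ∅ (Nat.zero_le _)
  have hAG3 := h w E hGEw ∅ (Nat.zero_le _)
  have hP0 : B.P (∅ : Finset ℕ) w = 0 := by simp [MBasis.P]
  rw [hP0, sub_zero] at hAG2 hAG3
  have hPSw : B.P Sy w = y := by
    have h1 : B.P Sy w = B.P Sy y := by
      simp only [MBasis.P]
      exact Finset.sum_congr rfl (fun n hn => by rw [hcwS n hn])
    rw [h1]
    exact B.P_eq_self (fun n hn => hFy.mem_toFinset.mpr hn)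
  have hPEw : B.P E w = B.P E y := by
    simp only [MBasis.P]
    exact Finset.sum_congr rfl (fun n hn => by rw [hcwS n (hESy n hn)])
  have hid : f + B.P E y = (w - B.P Sy w) + w - (w - B.P E w) := by
    rw [hPSw, hPEw, hwdef]
    abel
  have hnorm2 : ‖f + B.P E y‖ ≤ (1 + 2*Cal) * ‖w‖ := by
    rw [hid]
    calc ‖(w - B.P Sy w) + w - (w - B.P E w)‖
        ≤ ‖(w - B.P Sy w) + w‖ + ‖w - B.P E w‖ := norm_sub_le _ _
      _ ≤ (‖w - B.P Sy w‖ + ‖w‖) + ‖w - B.P E w‖ :=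
          add_le_add_left (norm_add_le _ _) _
      _ ≤ (Cal * ‖w‖ + ‖w‖) + Cal * ‖w‖ :=
          add_le_add (add_le_add hAG2 le_rfl) hAG3
      _ = (1 + 2*Cal) * ‖w‖ := by ring
  calc ‖f + z‖ ≤ Cal * ‖f + B.P E y‖ := hAG1
    _ ≤ Cal * ((1 + 2*Cal) * ‖w‖) := mul_le_mul_of_nonneg_left hnorm2 hCal0
    _ = Cal * (1 + 2 * Cal) * ‖f + y‖ := by rw [hwdef]; ring
end

section
/- If a Markushevich basis B is partially-greedy with constant C_p, then B has Property (F*_p) with constant 𝓕*_p ≤ C_p(1 + 2C_p). -/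
open Finset

section AuxLemmas

variable {X : Type*} [NormedAddCommGroup X] [NormedSpace ℝ X] (B : MBasis X)

lemma aux_coord_P (A : Finset ℕ) (g : X) (m : ℕ) :
    B.coord m (B.P A g) = if m ∈ A then B.coord m g else 0 := by
  unfold MBasis.P
  rw [map_sum]
  have hcongr : ∀ n ∈ A, B.coord m (B.coord n g • B.e n)
      = if m = n then B.coord n g else 0 := by
    intro n _
    rw [map_smul, B.biorth]
    by_cases hmn : m = n <;> simp [hmn]
  rw [Finset.sum_congr rfl hcongr, Finset.sum_ite_eq]

lemma aux_coord_ind (A : Finset ℕ) (m : ℕ) :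
    B.coord m (B.ind A) = if m ∈ A then 1 else 0 := by
  unfold MBasis.ind
  rw [map_sum]
  have hcongr : ∀ n ∈ A, B.coord m (B.e n) = if m = n then (1:ℝ) else 0 := by
    intro n _; rw [B.biorth]
  rw [Finset.sum_congr rfl hcongr, Finset.sum_ite_eq]

lemma aux_ext {a b : X} (hab : ∀ n, B.coord n a = B.coord n b) : a = b := by
  have h0 : a - b = 0 := B.total _ (fun n => by rw [map_sub, hab, sub_self])
  exact sub_eq_zero.mp h0

lemma aux_S_zero (g : X) : B.S 0 g = 0 := by
  simp [MBasis.S, MBasis.P]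

end AuxLemmas

/-- If the basis is partially-greedy with constant `C_p`, then it has Property (F*_p)
with constant `𝓕*_p ≤ C_p(1 + 2C_p)`. -/
theorem partiallyGreedy_implies_propFStarP
    {X : Type*} [NormedAddCommGroup X] [NormedSpace ℝ X] [CompleteSpace X]
    (B : MBasis X) (Cp : ℝ) (h : B.PartiallyGreedy Cp) :
    B.PropFStarP (Cp * (1 + 2 * Cp)) := by
  intro f z y hf hz hy dfz dfy dzy hfc hzc hcard hdom hpos
  -- disjointness in coordinate form
  have dfz' : ∀ n, B.coord n f ≠ 0 → B.coord n z = 0 := by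
    intro n h1; by_contra h2; exact (Set.disjoint_left.mp dfz h1) h2
  have dfy' : ∀ n, B.coord n f ≠ 0 → B.coord n y = 0 := by
    intro n h1; by_contra h2; exact (Set.disjoint_left.mp dfy h1) h2
  have dzy' : ∀ n, B.coord n z ≠ 0 → B.coord n y = 0 := by
    intro n h1; by_contra h2; exact (Set.disjoint_left.mp dzy h1) h2
  have dyf' : ∀ n, B.coord n y ≠ 0 → B.coord n f = 0 := by
    intro n h1; by_contra h2; exact h1 (dfy' n h2)
  have dyz' : ∀ n, B.coord n y ≠ 0 → B.coord n z = 0 := by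
    intro n h1; by_contra h2; exact h1 (dzy' n h2)
  have dzf' : ∀ n, B.coord n z ≠ 0 → B.coord n f = 0 := by
    intro n h1; by_contra h2; exact h1 (dfz' n h2)
  -- Cp ≥ 1
  have he0 : B.e 0 ≠ 0 := by
    intro h0
    have hb := B.biorth 0 0
    rw [h0] at hb
    simp at hb
  have he0pos : 0 < ‖B.e 0‖ := norm_pos_iff.mpr he0
  have hCp : 1 ≤ Cp := by
    have h1 := h (B.e 0) ∅ (by intro n hn; simp at hn) 0 (Nat.zero_le _)
    simp [MBasis.P, MBasis.S] at h1
    nlinarith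
  -- the finset of supp y
  set Fy : Finset ℕ := hy.toFinset with hFydef
  have memFy : ∀ n, n ∈ Fy ↔ B.coord n y ≠ 0 := by
    intro n
    rw [hFydef, Set.Finite.mem_toFinset (s := B.supp y) hy]
    exact Iff.rfl
  -- (a) : ‖f‖ ≤ Cp * ‖f + y‖
  have hGy : B.Greedy (f + y) Fy := by
    intro n hn m hm
    have hny : B.coord n y ≠ 0 := (memFy n).mp hn
    have hnf : B.coord n f = 0 := dyf' n hny
    have hmy : B.coord m y = 0 := by
      by_contra h2; exact hm ((memFy m).mpr h2)
    rw [map_add, map_add, hnf, hmy, zero_add, add_zero]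
    exact hdom m n hny
  have hPFy : B.P Fy (f + y) = y := by
    apply aux_ext B
    intro n
    rw [aux_coord_P]
    by_cases hn : n ∈ Fy
    · have hnf : B.coord n f = 0 := dyf' n ((memFy n).mp hn)
      simp [hn, hnf]
    · have hny : B.coord n y = 0 := by
        by_contra h2; exact hn ((memFy n).mpr h2)
      simp [hn, hny]
  have ha : ‖f‖ ≤ Cp * ‖f + y‖ := by
    have h1 := h (f + y) Fy hGy 0 (Nat.zero_le _)
    rw [hPFy, aux_S_zero, sub_zero] at h1
    have h2 : f + y - y = f := by abel
    rwa [h2] at h1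
  -- trivial case : z = 0
  by_cases hztriv : ∀ n, B.coord n z = 0
  · have hz0 : z = 0 := B.total z hztriv
    rw [hz0, add_zero]
    have hnn : 0 ≤ Cp * (Cp * ‖f + y‖) :=
      mul_nonneg (by linarith) (mul_nonneg (by linarith) (norm_nonneg _))
    nlinarith [hnn]
  -- main case
  push_neg at hztriv
  obtain ⟨n₀, hn₀⟩ := hztriv
  set Fz : Finset ℕ := hz.toFinset with hFzdef
  have memFz : ∀ n, n ∈ Fz ↔ B.coord n z ≠ 0 := by
    intro n
    rw [hFzdef, Set.Finite.mem_toFinset (s := B.supp z) hz]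
    exact Iff.rfl
  have hFzne : Fz.Nonempty := ⟨n₀, (memFz n₀).mpr hn₀⟩
  set k : ℕ := Fz.max' hFzne + 1 with hkdef
  have hFzk : ∀ n ∈ Fz, n < k := by
    intro n hn
    exact Nat.lt_succ_of_le (Finset.le_max' _ _ hn)
  have hge : ∀ j, (B.coord j f ≠ 0 ∨ B.coord j y ≠ 0) → k ≤ j := by
    intro j hj
    have hjfy : j ∈ B.supp (f + y) := by
      have hco : B.coord j (f + y) ≠ 0 := by
        rw [map_add]
        rcases hj with hjf | hjy
        · rw [dfy' j hjf, add_zero]; exact hjf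
        · rw [dyf' j hjy, zero_add]; exact hjy
      exact hco
    have hkz : Fz.max' hFzne ∈ B.supp z := by
      have hmem := Fz.max'_mem hFzne
      rw [memFz] at hmem
      exact hmem
    exact hpos _ hkz j hjfy
  set Λ : Finset ℕ := Fy.filter (fun n => 1 ≤ |B.coord n y|) with hLdef
  have memΛ : ∀ n, n ∈ Λ ↔ (B.coord n y ≠ 0 ∧ 1 ≤ |B.coord n y|) := by
    intro n
    rw [hLdef, Finset.mem_filter, memFy]
  set N : Finset ℕ := Finset.range k \ Fz with hNdef
  have memN : ∀ n, n ∈ N ↔ (n < k ∧ B.coord n z = 0) := by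
    intro n
    rw [hNdef, Finset.mem_sdiff, Finset.mem_range, memFz]
    simp
  set G : Finset ℕ := N ∪ Λ with hGdef
  set w : X := f + y + z + B.ind N with hwdef
  have hcw : ∀ n, B.coord n w
      = B.coord n f + B.coord n y + B.coord n z + (if n ∈ N then 1 else 0) := by
    intro n
    rw [hwdef, map_add, map_add, map_add, aux_coord_ind]
  -- greediness of G for w
  have hbig : ∀ n ∈ G, 1 ≤ |B.coord n w| := by
    intro n hn
    rw [hGdef, Finset.mem_union] at hn
    rcases hn with hnN | hnΛ
    · obtain ⟨hnk, hnz⟩ := (memN n).mp hnN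
      have hnf : B.coord n f = 0 := by
        by_contra h2; exact absurd (hge n (Or.inl h2)) (not_le.mpr hnk)
      have hny : B.coord n y = 0 := by
        by_contra h2; exact absurd (hge n (Or.inr h2)) (not_le.mpr hnk)
      rw [hcw n, hnf, hny, hnz, if_pos hnN]
      norm_num
    · obtain ⟨hny, hny1⟩ := (memΛ n).mp hnΛ
      have hnN : n ∉ N := by
        intro h2
        exact absurd (hge n (Or.inr hny)) (not_le.mpr ((memN n).mp h2).1)
      rw [hcw n, dyf' n hny, dyz' n hny, if_neg hnN]
      simpa using hny1
  have hsmall : ∀ m, m ∉ G → |B.coord m w| ≤ 1 := by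
    intro m hm
    rw [hGdef, Finset.mem_union] at hm
    push_neg at hm
    obtain ⟨hmN, hmΛ⟩ := hm
    rw [hcw m, if_neg hmN, add_zero]
    by_cases hmz : B.coord m z = 0
    · rw [hmz, add_zero]
      by_cases hmy : B.coord m y = 0
      · rw [hmy, add_zero]
        exact hfc m
      · rw [dyf' m hmy, zero_add]
        have hlt : ¬ (1 ≤ |B.coord m y|) := by
          intro h2; exact hmΛ ((memΛ m).mpr ⟨hmy, h2⟩)
        linarith [not_le.mp hlt]
    · rw [dzf' m hmz, dzy' m hmz, zero_add, zero_add]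
      exact hzc m
  have hGw : B.Greedy w G := by
    intro n hn m hm
    exact (hsmall m hm).trans (hbig n hn)
  -- cardinality : k ≤ G.card
  have hFzsub : Fz ⊆ Finset.range k := by
    intro n hn
    exact Finset.mem_range.mpr (hFzk n hn)
  have hNcard : N.card = k - Fz.card := by
    rw [hNdef, Finset.card_sdiff_of_subset hFzsub, Finset.card_range]
  have hdisNΛ : Disjoint N Λ := by
    rw [Finset.disjoint_left]
    intro a haN haΛ
    have h1 : a < k := ((memN a).mp haN).1
    have h2 : B.coord a y ≠ 0 := ((memΛ a).mp haΛ).1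
    exact absurd (hge a (Or.inr h2)) (not_le.mpr h1)
  have hΛcard : Fz.card ≤ Λ.card := by
    have h1 : (B.supp z).ncard = Fz.card := by
      rw [← Set.ncard_coe_finset Fz, hFzdef, Set.Finite.coe_toFinset (s := B.supp z) hz]
    have hsub : B.unitSet y ⊆ (↑Λ : Set ℕ) := by
      intro n hn
      obtain ⟨hn1, hn2⟩ := hn
      rw [Finset.mem_coe, memΛ]
      exact ⟨hn1, le_of_eq hn2.symm⟩
    have h2 : (B.unitSet y).ncard ≤ Λ.card := by
      calc (B.unitSet y).ncard ≤ (↑Λ : Set ℕ).ncard :=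
            Set.ncard_le_ncard hsub (Λ.finite_toSet)
        _ = Λ.card := Set.ncard_coe_finset _
    rw [h1] at hcard
    exact hcard.trans h2
  have hkG : k ≤ G.card := by
    rw [hGdef, Finset.card_union_of_disjoint hdisNΛ, hNcard]
    have hle : Fz.card ≤ k := by
      have := Finset.card_le_card hFzsub
      rwa [Finset.card_range] at this
    omega
  -- apply partial greediness to w
  have hmain := h w G hGw k hkG
  -- identify w - S k w = f + y
  have hE1 : w - B.S k w = f + y := by
    apply aux_ext B
    intro n
    have hSk : B.coord n (B.S k w) = if n ∈ Finset.range k then B.coord n w else 0 :=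
      aux_coord_P B (Finset.range k) w n
    have hrhs : B.coord n (f + y) = B.coord n f + B.coord n y := map_add _ _ _
    rw [map_sub, hSk, hrhs]
    by_cases hnk : n < k
    · rw [if_pos (Finset.mem_range.mpr hnk), sub_self]
      have hnf : B.coord n f = 0 := by
        by_contra h2; exact absurd (hge n (Or.inl h2)) (not_le.mpr hnk)
      have hny : B.coord n y = 0 := by
        by_contra h2; exact absurd (hge n (Or.inr h2)) (not_le.mpr hnk)
      rw [hnf, hny, add_zero]
    · rw [if_neg (fun h2 => hnk (Finset.mem_range.mp h2)), sub_zero, hcw n]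
      have hnz : B.coord n z = 0 := by
        by_contra h2
        exact hnk (hFzk n ((memFz n).mpr h2))
      have hnN : n ∉ N := fun h2 => hnk ((memN n).mp h2).1
      rw [hnz, if_neg hnN, add_zero, add_zero]
  -- identify w - P G w = f + z + (y - P Λ y)
  have hE2 : w - B.P G w = f + z + (y - B.P Λ y) := by
    apply aux_ext B
    intro n
    have hPG : B.coord n (B.P G w) = if n ∈ G then B.coord n w else 0 :=
      aux_coord_P B G w n
    have hrhs : B.coord n (f + z + (y - B.P Λ y))
        = B.coord n f + B.coord n z + (B.coord n y - (if n ∈ Λ then B.coord n y else 0)) := by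
      rw [map_add, map_add, map_sub, aux_coord_P]
    rw [map_sub, hPG, hrhs]
    by_cases hnN : n ∈ N
    · have hnG : n ∈ G := by rw [hGdef, Finset.mem_union]; exact Or.inl hnN
      rw [if_pos hnG, sub_self]
      obtain ⟨hnk, hnz⟩ := (memN n).mp hnN
      have hnf : B.coord n f = 0 := by
        by_contra h2; exact absurd (hge n (Or.inl h2)) (not_le.mpr hnk)
      have hny : B.coord n y = 0 := by
        by_contra h2; exact absurd (hge n (Or.inr h2)) (not_le.mpr hnk)
      have hnΛ : n ∉ Λ := fun h2 => ((memΛ n).mp h2).1 hny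
      rw [hnf, hnz, hny, if_neg hnΛ]
      norm_num
    · by_cases hnΛ : n ∈ Λ
      · have hnG : n ∈ G := by rw [hGdef, Finset.mem_union]; exact Or.inr hnΛ
        rw [if_pos hnG, sub_self]
        have hny : B.coord n y ≠ 0 := ((memΛ n).mp hnΛ).1
        rw [dyf' n hny, dyz' n hny, if_pos hnΛ]
        norm_num
      · have hnG : n ∉ G := by
          rw [hGdef, Finset.mem_union]
          rintro (h2 | h2)
          exacts [hnN h2, hnΛ h2]
        rw [if_neg hnG, sub_zero, hcw n, if_neg hnN, if_neg hnΛ]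
        ring
  rw [hE1, hE2] at hmain
  -- (b) : ‖f + y - P Λ y‖ ≤ Cp * ‖f + y‖
  have hGΛ : B.Greedy (f + y) Λ := by
    intro n hn m hm
    obtain ⟨hny, hny1⟩ := (memΛ n).mp hn
    have hnval : B.coord n (f + y) = B.coord n y := by
      rw [map_add, dyf' n hny, zero_add]
    have hmval : |B.coord m (f + y)| ≤ 1 := by
      rw [map_add]
      by_cases hmy : B.coord m y = 0
      · rw [hmy, add_zero]; exact hfc m
      · rw [dyf' m hmy, zero_add]
        have hlt : ¬ (1 ≤ |B.coord m y|) := by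
          intro h2; exact hm ((memΛ m).mpr ⟨hmy, h2⟩)
        linarith [not_le.mp hlt]
    rw [hnval]
    exact hmval.trans hny1
  have hPΛ : B.P Λ (f + y) = B.P Λ y := by
    apply aux_ext B
    intro n
    rw [aux_coord_P, aux_coord_P]
    by_cases hn : n ∈ Λ
    · have hny : B.coord n y ≠ 0 := ((memΛ n).mp hn).1
      rw [if_pos hn, if_pos hn, map_add, dyf' n hny, zero_add]
    · rw [if_neg hn, if_neg hn]
  have hb : ‖f + y - B.P Λ y‖ ≤ Cp * ‖f + y‖ := by
    have h1 := h (f + y) Λ hGΛ 0 (Nat.zero_le _)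
    rwa [hPΛ, aux_S_zero, sub_zero] at h1
  -- assemble
  have hid : f + z = (f + z + (y - B.P Λ y)) - (f + y - B.P Λ y) + f := by abel
  have htri : ‖f + z‖ ≤ ‖f + z + (y - B.P Λ y)‖ + ‖f + y - B.P Λ y‖ + ‖f‖ := by
    calc ‖f + z‖
        = ‖(f + z + (y - B.P Λ y)) - (f + y - B.P Λ y) + f‖ :=
          congrArg (fun v : X => ‖v‖) hid
      _ ≤ ‖(f + z + (y - B.P Λ y)) - (f + y - B.P Λ y)‖ + ‖f‖ := norm_add_le _ _
      _ ≤ ‖f + z + (y - B.P Λ y)‖ + ‖f + y - B.P Λ y‖ + ‖f‖ := by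
          have := norm_sub_le (f + z + (y - B.P Λ y)) (f + y - B.P Λ y)
          linarith
  have hfinal : ‖f + z‖ ≤ 3 * (Cp * ‖f + y‖) := by linarith
  have hnn : 0 ≤ Cp * (Cp - 1) * ‖f + y‖ :=
    mul_nonneg (mul_nonneg (by linarith) (by linarith)) (norm_nonneg _)
  nlinarith [hnn]
end
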